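/- arXiv:1205.5663 — 6 statements merged into one kernel-verified Lean document; each statement's English description precedes it below -/
import Mathlib

section
/- For every positive real number k there exists a pair of real numbers (α, β) such that for every s > 0 one has limsup_{N→∞} log(Z_N(α, β, s))/N^k = +∞; in particular, (α, β) does not have a k-free energy limit for any choice of s_c. -/
open Matrix Filter

noncomputable section

/-- The matrix `A₀` with rows (0,0,1), (1,0,−1), (0,1,0). -/
def A0 : Matrix (Fin 3) (Fin 3) ℝ := !![0,0,1; 1,0,-1; 0,1,0]

/-- The matrix `A₁` with rows (1,0,0), (0,1,0), (−1,0,1). -/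
def A1 : Matrix (Fin 3) (Fin 3) ℝ := !![1,0,0; 0,1,0; -1,0,1]

/-- `Amat 0 = A₀`, `Amat 1 = A₁`. -/
def Amat : Fin 2 → Matrix (Fin 3) (Fin 3) ℝ := ![A0, A1]

/-- The matrix `M` with rows (0,0,1), (0,0,α), (0,0,β). -/
def Mmat (α β : ℝ) : Matrix (Fin 3) (Fin 3) ℝ := !![0,0,1; 0,0,α; 0,0,β]

/-- Hilbert–Schmidt (Hadamard) product `A*B = Tr(A Bᵀ)`. -/
def HS (A B : Matrix (Fin 3) (Fin 3) ℝ) : ℝ := (A * Bᵀ).trace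

/-- `A^I = A_{σ₁} A_{σ₂} ⋯ A_{σ_N}` for a state `I = (σ₁,…,σ_N) ∈ {0,1}^N`. -/
def AI {N : ℕ} (I : Fin N → Fin 2) : Matrix (Fin 3) (Fin 3) ℝ :=
  (List.ofFn fun i => Amat (I i)).prod

/-- The partition function `Z_N(α, β, s) = Σ_{I ∈ 𝒮_N} 1/|M*A^I|^s`. -/
def Z (N : ℕ) (α β s : ℝ) : ℝ :=
  ∑ I : Fin N → Fin 2, 1 / |HS (Mmat α β) (AI I)| ^ s

/-! ### Auxiliary machinery -/

/-- The three-dimensional linear dynamics corresponding to left multiplication of the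
row vector `(1, α, β)` (in coefficient form) by `A₀`, `A₁`. -/
def st (σ : Fin 2) (v : ℝ × ℝ × ℝ) : ℝ × ℝ × ℝ :=
  if σ = 0 then (v.2.2, v.1 - v.2.2, v.2.1) else (v.1, v.2.1, v.2.2 - v.1)

/-- The third column of `A^I`, as a triple, computed by the dynamics `st`. -/
def fw (l : List (Fin 2)) : ℝ × ℝ × ℝ := l.foldr st (0, 0, 1)

lemma fw_cons (σ : Fin 2) (l : List (Fin 2)) : fw (σ :: l) = st σ (fw l) := rfl

lemma st0 (v : ℝ × ℝ × ℝ) : st 0 v = (v.2.2, v.1 - v.2.2, v.2.1) := by simp [st]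

lemma HS_eq (α β : ℝ) (B : Matrix (Fin 3) (Fin 3) ℝ) :
    HS (Mmat α β) B = B 0 2 + α * B 1 2 + β * B 2 2 := by
  simp [HS, Matrix.trace, Matrix.mul_apply, Matrix.diag, Fin.sum_univ_three, Mmat]

def Pl (l : List (Fin 2)) : Matrix (Fin 3) (Fin 3) ℝ := (l.map Amat).prod

lemma Pl_col (l : List (Fin 2)) :
    Pl l 0 2 = (fw l).1 ∧ Pl l 1 2 = (fw l).2.1 ∧ Pl l 2 2 = (fw l).2.2 := by
  induction l with
  | nil => simp [Pl, fw, Matrix.one_apply]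
  | cons σ t ih =>
    obtain ⟨h1, h2, h3⟩ := ih
    fin_cases σ
    · have hp : Pl (0 :: t) = A0 * Pl t := by simp [Pl, Amat]
      have hf : fw (0 :: t) = st 0 (fw t) := rfl
      refine ⟨?_, ?_, ?_⟩ <;>
        simp [hp, hf, st, Matrix.mul_apply, Fin.sum_univ_three, A0, h1, h2, h3] <;> ring
    · have hp : Pl (1 :: t) = A1 * Pl t := by simp [Pl, Amat]
      have hf : fw (1 :: t) = st 1 (fw t) := rfl
      refine ⟨?_, ?_, ?_⟩ <;>
        simp [hp, hf, st, Matrix.mul_apply, Fin.sum_univ_three, A1, h1, h2, h3] <;> ring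

lemma AI_eq (l : List (Fin 2)) : AI l.get = Pl l := by
  unfold AI Pl
  congr 1
  rw [show (fun i => Amat (l.get i)) = Amat ∘ l.get from rfl, ← List.map_ofFn, List.ofFn_get]

lemma HS_fw (α β : ℝ) (l : List (Fin 2)) :
    HS (Mmat α β) (AI l.get) = (fw l).1 + α * (fw l).2.1 + β * (fw l).2.2 := by
  obtain ⟨h1, h2, h3⟩ := Pl_col l
  rw [AI_eq, HS_eq, h1, h2, h3]

lemma fw_rep1 (n : ℕ) (l : List (Fin 2)) :
    fw (List.replicate n 1 ++ l) = ((fw l).1, (fw l).2.1, (fw l).2.2 - n * (fw l).1) := by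
  induction n with
  | zero => simp
  | succ m ih =>
    rw [List.replicate_succ, List.cons_append, fw_cons, ih]
    simp [st]
    ring

/-- the master transition: prepend `0 1^n 0 1^a`. -/
lemma fw_step (w : List (Fin 2)) (p q B : ℝ) (hw : fw w = (-p, q, -B)) (a n : ℕ) :
    fw (0 :: (List.replicate n 1 ++ (0 :: (List.replicate a 1 ++ w))))
      = (-((n:ℝ) * ((a:ℝ) * p - B) - q),
         ((n:ℝ) + 1) * ((a:ℝ) * p - B) - q,
         -(p + ((a:ℝ) * p - B))) := by
  rw [fw_cons, fw_rep1, fw_cons, fw_rep1, hw, st0, st0]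
  simp only [Prod.mk.injEq]
  refine ⟨by ring, by ring, by ring⟩

def Weven : ℕ → List (Fin 2)
  | 0 => [0,1,1,0,0,0,0]
  | k+1 => 0 :: (List.replicate 1 1 ++ (0 :: (List.replicate (4*k+5) 1 ++ Weven k)))

def Wodd : ℕ → List (Fin 2)
  | 0 => [0,1,0,1,0,0,0]
  | k+1 => 0 :: (List.replicate 1 1 ++ (0 :: (List.replicate (4*k+7) 1 ++ Wodd k)))

lemma Weven_spec (k : ℕ) : fw (Weven k) = (-1, (2*k+2 : ℝ), -(2*k+2 : ℝ)) := by
  induction k with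
  | zero => norm_num [Weven, fw, st]
  | succ m ih =>
    rw [Weven, fw_step _ 1 (2*m+2 : ℝ) (2*m+2 : ℝ) (by rw [ih])]
    refine Prod.ext ?_ (Prod.ext ?_ ?_) <;> (show _ = _ ; push_cast ; ring)

lemma Wodd_spec (k : ℕ) : fw (Wodd k) = (-1, (2*k+3 : ℝ), -(2*k+3 : ℝ)) := by
  induction k with
  | zero => norm_num [Wodd, fw, st]
  | succ m ih =>
    rw [Wodd, fw_step _ 1 (2*m+3 : ℝ) (2*m+3 : ℝ) (by rw [ih])]
    refine Prod.ext ?_ (Prod.ext ?_ ?_) <;> (show _ = _ ; push_cast ; ring)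

/-- every `q ≥ 2` has a word with `fw = (-1, q, -q)`. -/
lemma exists_W1 (q : ℕ) (hq : 2 ≤ q) : ∃ w : List (Fin 2), fw w = (-1, (q:ℝ), -(q:ℝ)) := by
  rcases Nat.even_or_odd q with ⟨m, hm⟩ | ⟨m, hm⟩
  · have hm1 : 1 ≤ m := by omega
    refine ⟨Weven (m-1), ?_⟩
    rw [Weven_spec]
    have : 2*(m-1)+2 = q := by omega
    rw [← this]
    refine Prod.ext ?_ (Prod.ext ?_ ?_) <;> (show _ = _ ; push_cast ; ring)
  · have hm1 : 1 ≤ m := by omega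
    refine ⟨Wodd (m-1), ?_⟩
    rw [Wodd_spec]
    have : 2*(m-1)+3 = q := by omega
    rw [← this]
    refine Prod.ext ?_ (Prod.ext ?_ ?_) <;> (show _ = _ ; push_cast ; ring)

/-- master word: for any `p ≥ 1`, `K ≥ 1` a word with `fw = (-p, p+K, -(1+K))`. -/
def mword (p K : ℕ) (w : List (Fin 2)) : List (Fin 2) :=
  0 :: (List.replicate (p+2) 1 ++ (0 :: (List.replicate (K + (K*(p+2)-p)) 1 ++ w)))

lemma mword_spec (p K : ℕ) (hK : 1 ≤ K) (w : List (Fin 2))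
    (hw : fw w = (-1, ((K*(p+2)-p : ℕ) : ℝ), -((K*(p+2)-p : ℕ) : ℝ))) :
    fw (mword p K w) = (-(p:ℝ), (p:ℝ) + K, -(1 + (K:ℝ))) := by
  have hle : p ≤ K*(p+2) := by nlinarith
  rw [mword, fw_step _ 1 ((K*(p+2)-p : ℕ) : ℝ) ((K*(p+2)-p : ℕ) : ℝ) hw]
  refine Prod.ext ?_ (Prod.ext ?_ ?_) <;> (show _ = _ ; push_cast [Nat.cast_sub hle] ; ring)

lemma mword_len (p K : ℕ) (w : List (Fin 2)) : p + 2 ≤ (mword p K w).length := by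
  simp [mword]
  omega

def Wbase (q : ℕ) : List (Fin 2) :=
  if h : 2 ≤ q then (exists_W1 q h).choose else []

lemma Wbase_spec (q : ℕ) (h : 2 ≤ q) : fw (Wbase q) = (-1, (q:ℝ), -(q:ℝ)) := by
  rw [Wbase, dif_pos h]
  exact (exists_W1 q h).choose_spec

def bigword (p K : ℕ) : List (Fin 2) := mword p K (Wbase (K*(p+2)-p))

lemma bigword_spec (p K : ℕ) (hK : 1 ≤ K) :
    fw (bigword p K) = (-(p:ℝ), (p:ℝ) + K, -(1 + (K:ℝ))) := by
  have h1 : p + 2 ≤ K * (p+2) := Nat.le_mul_of_pos_left (p+2) hK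
  have hq : 2 ≤ K*(p+2)-p := by omega
  exact mword_spec p K hK _ (Wbase_spec _ hq)

lemma bigword_len (p K : ℕ) : p + 2 ≤ (bigword p K).length := mword_len _ _ _

/-- the length function used in the recursive definition of the parameters. -/
def glen : ℕ → ℕ → ℕ := fun p K => (bigword p K).length

/-- the recursion producing `(c_j, p_j)`. -/
def DD (κ : ℕ) : ℕ → ℕ × ℕ
  | 0 => (2, 1)
  | j+1 =>
    let c := (DD κ j).1
    let p := (DD κ j).2
    let c' := c + 2 + (j+1) * (glen p (2^c - p) + 1)^κ
    (c', p * 2^(c' - c) + 1)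

variable (κ : ℕ)

def cc (j : ℕ) : ℕ := (DD κ j).1
def pp (j : ℕ) : ℕ := (DD κ j).2
def NN (j : ℕ) : ℕ := glen (pp κ j) (2^(cc κ j) - pp κ j)

lemma cc_succ (j : ℕ) : cc κ (j+1) = cc κ j + 2 + (j+1) * (NN κ j + 1)^κ := rfl

lemma pp_succ (j : ℕ) :
    pp κ (j+1) = pp κ j * 2^(cc κ (j+1) - cc κ j) + 1 := by
  show (DD κ (j+1)).2 = _
  rw [DD]
  rfl

lemma cc_zero : cc κ 0 = 2 := rfl
lemma pp_zero : pp κ 0 = 1 := rfl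

lemma pp_ge (j : ℕ) : j + 1 ≤ pp κ j := by
  induction j with
  | zero => simp [pp_zero]
  | succ m ih =>
    have h2 : 1 ≤ 2^(cc κ (m+1) - cc κ m) := Nat.one_le_two_pow
    rw [pp_succ]
    nlinarith

lemma pp_bound (j : ℕ) : 3 * pp κ j + 3 ≤ 2^(cc κ j + 1) := by
  induction j with
  | zero => simp [pp_zero, cc_zero]
  | succ m ih =>
    have hd : cc κ (m+1) - cc κ m = 2 + (m+1) * (NN κ m + 1)^κ := by
      rw [cc_succ]; omega
    set d := cc κ (m+1) - cc κ m with hd'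
    have hd2 : 4 ≤ 2^d := by
      calc (4:ℕ) = 2^2 := rfl
      _ ≤ 2^d := Nat.pow_le_pow_right (by norm_num) (by omega)
    have hcs : cc κ (m+1) = cc κ m + d := by rw [cc_succ] at *; omega
    rw [pp_succ, hcs]
    have : (3 * pp κ m + 3) * 2^d ≤ 2^(cc κ m + 1) * 2^d :=
      Nat.mul_le_mul_right _ ih
    rw [← pow_add] at this
    have harr : cc κ m + 1 + d = cc κ m + d + 1 := by omega
    rw [harr] at this
    have hsimp : cc κ m + d - cc κ m = d := by omega
    rw [hsimp]
    nlinarith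

lemma pp_lt (j : ℕ) : pp κ j < 2^(cc κ j) := by
  have := pp_bound κ j
  have h : 2^(cc κ j + 1) = 2 * 2^(cc κ j) := by ring
  omega

lemma cc_mono_step (j : ℕ) : cc κ j + 2 ≤ cc κ (j+1) := by rw [cc_succ]; omega

lemma cc_add_ge (j i : ℕ) : cc κ j + 2*i ≤ cc κ (j + i) := by
  induction i with
  | zero => simp
  | succ m ih =>
    have := cc_mono_step κ (j + m)
    have h2 : j + (m+1) = (j + m) + 1 := by omega
    rw [h2]
    omega

lemma cc_ge (j : ℕ) : j + 2 ≤ cc κ j := by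
  have := cc_add_ge κ 0 j
  simp [cc_zero] at this
  omega

def ff (i : ℕ) : ℝ := ((2:ℝ)^(cc κ i))⁻¹

lemma ff_le (i : ℕ) : ff κ i ≤ (1/2:ℝ)^i := by
  rw [ff, one_div, inv_pow]
  apply inv_anti₀ (by positivity)
  apply pow_le_pow_right₀ (by norm_num)
  have := cc_ge κ i; omega

lemma ff_summable : Summable (ff κ) :=
  Summable.of_nonneg_of_le (fun i => by rw [ff]; positivity) (ff_le κ)
    summable_geometric_two

lemma tail_bound (j : ℕ) :
    ∑' i : ℕ, ff κ (i + (j+1)) ≤ 2 * ((2:ℝ)^(cc κ (j+1)))⁻¹ := by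
  have hsum : Summable (fun i => ff κ (i + (j+1))) :=
    (summable_nat_add_iff (j+1)).2 (ff_summable κ)
  have hb : ∀ i : ℕ, ff κ (i + (j+1)) ≤ ((2:ℝ)^(cc κ (j+1)))⁻¹ * (1/4:ℝ)^i := by
    intro i
    have h1 : cc κ (j+1) + 2*i ≤ cc κ (i + (j+1)) := by
      have h := cc_add_ge κ (j+1) i
      rw [show j+1+i = i+(j+1) by omega] at h
      omega
    have h2 : ((2:ℝ)^(cc κ (i+(j+1))))⁻¹ ≤ ((2:ℝ)^(cc κ (j+1) + 2*i))⁻¹ :=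
      inv_anti₀ (by positivity) (pow_le_pow_right₀ (by norm_num) h1)
    rw [ff]
    refine h2.trans (le_of_eq ?_)
    rw [pow_add, mul_inv, pow_mul, one_div, inv_pow]
    norm_num
  have hgs : Summable (fun i : ℕ => ((2:ℝ)^(cc κ (j+1)))⁻¹ * (1/4:ℝ)^i) :=
    (summable_geometric_of_lt_one (by norm_num) (by norm_num)).mul_left _
  calc ∑' i : ℕ, ff κ (i + (j+1)) ≤ ∑' i : ℕ, ((2:ℝ)^(cc κ (j+1)))⁻¹ * (1/4:ℝ)^i :=
        Summable.tsum_le_tsum hb hsum hgs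
  _ = ((2:ℝ)^(cc κ (j+1)))⁻¹ * (4/3) := by
        rw [tsum_mul_left, tsum_geometric_of_lt_one (by norm_num) (by norm_num)]
        norm_num
  _ ≤ 2 * ((2:ℝ)^(cc κ (j+1)))⁻¹ := by
        nlinarith [inv_nonneg.2 (le_of_lt (pow_pos (show (0:ℝ)<2 by norm_num) (cc κ (j+1))))]

lemma tail_pos (j : ℕ) : 0 < ∑' i : ℕ, ff κ (i + (j+1)) := by
  have hsum : Summable (fun i => ff κ (i + (j+1))) :=
    (summable_nat_add_iff (j+1)).2 (ff_summable κ)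
  exact Summable.tsum_pos hsum (fun i => by rw [ff]; positivity) 0 (by rw [ff]; positivity)

/-- the Liouville-type number. -/
def alpha : ℝ := ∑' i, ff κ i

def SS (j : ℕ) : ℝ := ∑ i ∈ Finset.range (j+1), ff κ i

lemma alpha_split (j : ℕ) : SS κ j + ∑' i : ℕ, ff κ (i + (j+1)) = alpha κ :=
  Summable.sum_add_tsum_nat_add (j+1) (ff_summable κ)

lemma pp_eq (j : ℕ) : (pp κ j : ℝ) = 2^(cc κ j) * SS κ j := by
  induction j with
  | zero =>
    rw [pp_zero, SS]
    norm_num [ff, cc_zero]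
  | succ m ih =>
    have hd : cc κ (m+1) = cc κ m + (cc κ (m+1) - cc κ m) := by
      have := cc_mono_step κ m; omega
    have hSs : SS κ (m+1) = SS κ m + ff κ (m+1) := Finset.sum_range_succ _ _
    rw [pp_succ]
    push_cast
    rw [ih, hSs, mul_add, ff, mul_inv_cancel₀ (by positivity)]
    rw [mul_comm ((2:ℝ)^(cc κ m)) (SS κ m), mul_assoc, ← pow_add, ← hd, mul_comm (SS κ m)]

def delta (j : ℕ) : ℝ := 2^(cc κ j) * alpha κ - pp κ j

lemma delta_eq (j : ℕ) : delta κ j = 2^(cc κ j) * ∑' i : ℕ, ff κ (i + (j+1)) := by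
  rw [delta, ← alpha_split κ j, pp_eq]
  ring

lemma delta_pos (j : ℕ) : 0 < delta κ j := by
  rw [delta_eq]
  exact mul_pos (by positivity) (tail_pos κ j)

def ee (j : ℕ) : ℕ := (j+1) * (NN κ j + 1)^κ + 1

lemma delta_le (j : ℕ) : delta κ j ≤ ((2:ℝ)^(ee κ j))⁻¹ := by
  have hcs : cc κ (j+1) = cc κ j + 1 + ee κ j := by rw [cc_succ, ee]; ring
  calc delta κ j = 2^(cc κ j) * ∑' i : ℕ, ff κ (i + (j+1)) := delta_eq κ j
  _ ≤ 2^(cc κ j) * (2 * ((2:ℝ)^(cc κ (j+1)))⁻¹) :=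
      mul_le_mul_of_nonneg_left (tail_bound κ j) (by positivity)
  _ = ((2:ℝ)^(ee κ j))⁻¹ := by
      rw [hcs, pow_add, pow_add]
      field_simp

/-- the special word of index `j`. -/
def lw (j : ℕ) : List (Fin 2) := bigword (pp κ j) (2^(cc κ j) - pp κ j)

lemma NN_eq_len (j : ℕ) : NN κ j = (lw κ j).length := rfl

lemma HS_lw (j : ℕ) : HS (Mmat (alpha κ) 0) (AI (lw κ j).get) = delta κ j := by
  have hK : 1 ≤ 2^(cc κ j) - pp κ j := by
    have := pp_lt κ j; omega
  have hlt := pp_lt κ j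
  rw [lw, HS_fw, bigword_spec _ _ hK]
  show -(pp κ j : ℝ) + alpha κ * ((pp κ j : ℝ) + ((2^(cc κ j) - pp κ j : ℕ) : ℝ)) + 0 * _ = _
  rw [delta]
  push_cast [Nat.cast_sub hlt.le]
  ring

lemma NN_ge (j : ℕ) : j + 3 ≤ NN κ j := by
  have h1 := bigword_len (pp κ j) (2^(cc κ j) - pp κ j)
  have h2 := pp_ge κ j
  have : NN κ j = (bigword (pp κ j) (2^(cc κ j) - pp κ j)).length := rfl
  omega

lemma Z_lb (j : ℕ) (s : ℝ) (hs : 0 < s) :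
    ((2:ℝ)^(ee κ j)) ^ s ≤ Z (NN κ j) (alpha κ) 0 s := by
  have hterm : (1:ℝ) / |HS (Mmat (alpha κ) 0) (AI ((lw κ j).get : Fin (NN κ j) → Fin 2))| ^ s
      ≤ Z (NN κ j) (alpha κ) 0 s := by
    apply Finset.single_le_sum (f := fun I : Fin (NN κ j) → Fin 2 =>
      1 / |HS (Mmat (alpha κ) 0) (AI I)| ^ s)
    · intro i _
      positivity
    · exact Finset.mem_univ _
  refine le_trans ?_ hterm
  rw [HS_lw, abs_of_pos (delta_pos κ j)]
  have h1 : delta κ j ^ s ≤ (((2:ℝ)^(ee κ j))⁻¹) ^ s :=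
    Real.rpow_le_rpow (delta_pos κ j).le (delta_le κ j) hs.le
  rw [Real.inv_rpow (by positivity)] at h1
  have h2 : (1:ℝ) / ((((2:ℝ)^(ee κ j)) ^ s)⁻¹) ≤ 1 / delta κ j ^ s :=
    one_div_le_one_div_of_le (Real.rpow_pos_of_pos (delta_pos κ j) s) h1
  rwa [one_div, inv_inv] at h2

lemma logZ_lb (j : ℕ) (s : ℝ) (hs : 0 < s) :
    s * (ee κ j) * Real.log 2 ≤ Real.log (Z (NN κ j) (alpha κ) 0 s) := by
  have h0 : (0:ℝ) < ((2:ℝ)^(ee κ j)) ^ s := Real.rpow_pos_of_pos (by positivity) s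
  have := Real.log_le_log h0 (Z_lb κ j s hs)
  rwa [Real.log_rpow (by positivity), Real.log_pow, ← mul_assoc] at this

/-- For every positive real `k` there is a pair `(α, β)` such that for every `s > 0`
the `limsup` of `log(Z_N(α,β,s))/N^k` is `+∞`; in particular `(α, β)` has no
`k`-free energy limit for any choice of `s_c`. -/
theorem no_k_free_energy_limit (k : ℝ) (hk : 0 < k) :
    ∃ α β : ℝ,
      (∀ s : ℝ, 0 < s →
        Filter.limsup (fun N : ℕ => ((Real.log (Z N α β s) / (N : ℝ) ^ k : ℝ) : EReal))
          Filter.atTop = ⊤) ∧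
      ¬ ∃ sc : ℝ, ∀ s : ℝ, sc < s → ∃ L : ℝ,
          Filter.Tendsto (fun N : ℕ => Real.log (Z N α β s) / (s * (N : ℝ) ^ k))
            Filter.atTop (nhds L) := by
  set κ := max 1 (Nat.ceil k) with hκ
  have hkκ : k ≤ (κ : ℝ) := by
    calc k ≤ (Nat.ceil k : ℝ) := Nat.le_ceil k
    _ ≤ (κ : ℝ) := by exact_mod_cast Nat.cast_le.2 (le_max_right _ _)
  have hpart1 : ∀ s : ℝ, 0 < s →
      Filter.limsup (fun N : ℕ => ((Real.log (Z N (alpha κ) 0 s) / (N : ℝ) ^ k : ℝ) : EReal))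
        Filter.atTop = ⊤ := by
    intro s hs
    rw [EReal.eq_top_iff_forall_lt]
    intro y
    have hlog2 : (0:ℝ) < Real.log 2 := Real.log_pos (by norm_num)
    have hle : ((y+1 : ℝ) : EReal) ≤
        Filter.limsup (fun N : ℕ => ((Real.log (Z N (alpha κ) 0 s) / (N : ℝ) ^ k : ℝ) : EReal))
          Filter.atTop := by
      apply le_limsup_of_frequently_le'
      rw [Filter.frequently_atTop]
      intro m
      obtain ⟨j0, hj0⟩ := exists_nat_gt ((y+1) / (s * Real.log 2))
      set j := max m j0 with hj
      refine ⟨NN κ j, ?_, ?_⟩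
      · have := NN_ge κ j
        omega
      · rw [show ((y+1:ℝ) : EReal) ≤ ((Real.log (Z (NN κ j) (alpha κ) 0 s) / (NN κ j : ℝ) ^ k : ℝ) : EReal)
          ↔ (y+1:ℝ) ≤ Real.log (Z (NN κ j) (alpha κ) 0 s) / (NN κ j : ℝ) ^ k from EReal.coe_le_coe_iff]
        have hN3 : 3 ≤ NN κ j := by have := NN_ge κ j; omega
        have hNpos : (0:ℝ) < (NN κ j : ℝ) := by exact_mod_cast (by omega : 0 < NN κ j)
        have hNk : (0:ℝ) < ((NN κ j : ℝ)) ^ k := Real.rpow_pos_of_pos hNpos k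
        rw [le_div_iff₀ hNk]
        have hy : (y+1) < s * (j+1) * Real.log 2 := by
          have h1 : (y+1) / (s * Real.log 2) < (j:ℝ) + 1 := by
            have : (j0:ℝ) ≤ (j:ℝ) := by exact_mod_cast Nat.cast_le.2 (le_max_right m j0)
            linarith
          have h2 : (0:ℝ) < s * Real.log 2 := by positivity
          calc (y+1) = ((y+1) / (s * Real.log 2)) * (s * Real.log 2) := by field_simp
          _ < ((j:ℝ)+1) * (s * Real.log 2) := by
              apply mul_lt_mul_of_pos_right h1 h2
          _ = s * (j+1) * Real.log 2 := by ring
        -- (N)^k ≤ (N+1)^κ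
        have hpow : ((NN κ j : ℝ)) ^ k ≤ ((NN κ j : ℝ) + 1) ^ (κ : ℕ) := by
          calc ((NN κ j : ℝ)) ^ k ≤ ((NN κ j : ℝ) + 1) ^ k :=
                Real.rpow_le_rpow hNpos.le (by linarith) hk.le
          _ ≤ ((NN κ j : ℝ) + 1) ^ (κ : ℝ) :=
                Real.rpow_le_rpow_of_exponent_le (by linarith) hkκ
          _ = ((NN κ j : ℝ) + 1) ^ (κ : ℕ) := Real.rpow_natCast _ κ
        have hee : s * ((j:ℝ)+1) * Real.log 2 * ((NN κ j : ℝ) + 1) ^ (κ:ℕ) ≤ s * (ee κ j) * Real.log 2 := by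
          rw [ee]
          push_cast
          nlinarith [pow_nonneg (by linarith : (0:ℝ) ≤ (NN κ j : ℝ) + 1) κ, hs.le, hlog2.le]
        calc (y+1) * ((NN κ j : ℝ)) ^ k ≤ (s * (j+1) * Real.log 2) * ((NN κ j : ℝ)) ^ k := by
              apply mul_le_mul_of_nonneg_right hy.le hNk.le
        _ ≤ (s * (j+1) * Real.log 2) * (((NN κ j : ℝ) + 1) ^ (κ:ℕ)) := by
              apply mul_le_mul_of_nonneg_left hpow
              positivity
        _ ≤ s * (ee κ j) * Real.log 2 := hee
        _ ≤ Real.log (Z (NN κ j) (alpha κ) 0 s) := logZ_lb κ j s hs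
    calc ((y:ℝ) : EReal) < ((y+1 : ℝ) : EReal) := by
          exact_mod_cast EReal.coe_lt_coe_iff.2 (by linarith)
    _ ≤ _ := hle
  refine ⟨alpha κ, 0, hpart1, ?_⟩
  rintro ⟨sc, hsc⟩
  set s := max sc 0 + 1 with hsdef
  have hscs : sc < s := lt_of_le_of_lt (le_max_left sc 0) (by rw [hsdef]; linarith)
  have hs : 0 < s := by
    have := le_max_right sc (0:ℝ)
    rw [hsdef]; linarith
  obtain ⟨L, hL⟩ := hsc s hscs
  have heq : (fun N : ℕ => Real.log (Z N (alpha κ) 0 s) / (N : ℝ) ^ k)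
      = fun N : ℕ => s * (Real.log (Z N (alpha κ) 0 s) / (s * (N : ℝ) ^ k)) := by
    funext N
    rw [mul_div_assoc']
    rw [mul_div_mul_left _ _ (ne_of_gt hs)]
  have htends : Filter.Tendsto (fun N : ℕ => Real.log (Z N (alpha κ) 0 s) / (N : ℝ) ^ k)
      Filter.atTop (nhds (s * L)) := by
    rw [heq]
    exact hL.const_mul s
  have htendsE : Filter.Tendsto
      (fun N : ℕ => ((Real.log (Z N (alpha κ) 0 s) / (N : ℝ) ^ k : ℝ) : EReal))
      Filter.atTop (nhds ((s * L : ℝ) : EReal)) := EReal.tendsto_coe.2 htends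
  have hlim := htendsE.limsup_eq
  rw [hpart1 s hs] at hlim
  exact EReal.coe_ne_top _ hlim.symm

end
end

section
/- Let (α, β) be a pair of real numbers for which there exist a constant C > 0 and a constant d ≥ 2 such that 1/(C b^d) ≤ |p + αq + βr| for all relatively prime integers p, q, r, where b = max(|p|, |q|, |r|). Then for every k > 1 and every s > 2, lim_{N→∞} log(Z_N(α, β, s))/(s N^k) = 0; in particular, (α, β) has a k-free energy limit equal to zero for every k > 1. -/
/-! `A^I` is a product of integer matrices of determinant one, so its third column `(p, q, r)`
is a primitive integer vector, with entries at most `2^N` because each `Aᵢ` has ℓ∞ operator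
norm `2`; and `M*A^I = p + αq + βr`. The Diophantine hypothesis therefore pins every
`|M*A^I|` between `1/(C 2^{dN})` and `(1 + |α| + |β|) 2^N`, so `Z_N` lies between two
geometric sequences and `log Z_N = O(N) = o(N^k)` for `k > 1`. -/

open Matrix Filter

noncomputable section

open Asymptotics Topology

def AmatZ : Fin 2 → Matrix (Fin 3) (Fin 3) ℤ :=
  ![!![0,0,1; 1,0,-1; 0,1,0], !![1,0,0; 0,1,0; -1,0,1]]

lemma Amat_eq_map (σ : Fin 2) : Amat σ = (AmatZ σ).map (↑) := by
  fin_cases σ <;> ext i j <;> fin_cases i <;> fin_cases j <;> simp [Amat, AmatZ, A0, A1]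

lemma isUnit_AmatZ (σ : Fin 2) : IsUnit (AmatZ σ) := by
  rw [Matrix.isUnit_iff_isUnit_det]
  fin_cases σ <;> simp [AmatZ, Matrix.det_fin_three]

lemma exists_isUnit_map_eq_AI {N : ℕ} (I : Fin N → Fin 2) :
    ∃ B : Matrix (Fin 3) (Fin 3) ℤ, IsUnit B ∧ B.map (↑) = AI I := by
  refine ⟨(List.ofFn fun i => AmatZ (I i)).prod, List.prod_isUnit ?_, ?_⟩
  · simp only [List.mem_ofFn]
    rintro _ ⟨i, rfl⟩
    exact isUnit_AmatZ (I i)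
  · change (Int.castRingHom ℝ).mapMatrix _ = _
    rw [map_list_prod, List.map_ofFn, AI]
    exact congrArg List.prod (List.ofFn_inj.mpr (funext fun i => (Amat_eq_map (I i)).symm))

lemma gcd_col_eq_one_of_isUnit {B : Matrix (Fin 3) (Fin 3) ℤ} (hB : IsUnit B) (j : Fin 3) :
    Int.gcd (B 0 j) (Int.gcd (B 1 j) (B 2 j)) = 1 := by
  obtain ⟨u, rfl⟩ := hB
  set g : ℤ := ((Int.gcd (u.1 0 j) (Int.gcd (u.1 1 j) (u.1 2 j)) : ℕ) : ℤ)
  have hg : ∀ k, g ∣ u.1 k j := by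
    intro k
    fin_cases k
    · exact Int.gcd_dvd_left _ _
    · exact (Int.gcd_dvd_right _ _).trans (Int.gcd_dvd_left _ _)
    · exact (Int.gcd_dvd_right _ _).trans (Int.gcd_dvd_right _ _)
  have hdiag : ∑ k, (↑u⁻¹ : Matrix (Fin 3) (Fin 3) ℤ) j k * u.1 k j = 1 := by
    rw [← Matrix.mul_apply, Units.inv_mul, Matrix.one_apply_eq]
  have : g ∣ 1 := hdiag ▸ Finset.dvd_sum fun k _ => (hg k).mul_left _
  exact Nat.dvd_one.mp (Int.ofNat_dvd_left.mp this)

section LinftyNorm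

attribute [local instance] Matrix.linftyOpSeminormedAddCommGroup
attribute [local instance] Matrix.linftyOpNormedRing

lemma norm_apply_le_linfty_opNorm {m n α : Type*} [Fintype m] [Fintype n]
    [SeminormedAddCommGroup α] (A : Matrix m n α) (i : m) (j : n) : ‖A i j‖ ≤ ‖A‖ := by
  rw [Matrix.linfty_opNorm_def]
  calc ‖A i j‖ = ‖A i j‖₊ := rfl
    _ ≤ ∑ k, ‖A i k‖₊ := by
      exact_mod_cast Finset.single_le_sum (f := fun k => ‖A i k‖₊) (fun _ _ => zero_le)
        (Finset.mem_univ j)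
    _ ≤ _ := by
      exact_mod_cast Finset.le_sup (f := fun i => ∑ k, ‖A i k‖₊) (Finset.mem_univ i)

lemma linfty_opNorm_Amat_le (σ : Fin 2) : ‖Amat σ‖ ≤ 2 := by
  have : ‖Amat σ‖₊ ≤ 2 := by
    rw [Matrix.linfty_opNNNorm_def]
    refine Finset.sup_le fun i _ => ?_
    fin_cases σ <;> fin_cases i <;>
      norm_num [Amat, A0, A1, Fin.sum_univ_three, Matrix.cons_val_two]
  exact_mod_cast this

lemma abs_AI_apply_le {N : ℕ} (I : Fin N → Fin 2) (i j : Fin 3) : |AI I i j| ≤ 2 ^ N := by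
  calc |AI I i j| = ‖AI I i j‖ := (Real.norm_eq_abs _).symm
    _ ≤ ‖AI I‖ := norm_apply_le_linfty_opNorm _ i j
    _ ≤ ((List.ofFn fun i => Amat (I i)).map norm).prod := List.norm_prod_le _
    _ = ∏ i, ‖Amat (I i)‖ := by rw [List.map_ofFn, List.prod_ofFn]; rfl
    _ ≤ ∏ _i : Fin N, (2 : ℝ) :=
      Finset.prod_le_prod (fun _ _ => norm_nonneg _) fun i _ => linfty_opNorm_Amat_le (I i)
    _ = 2 ^ N := by simp

end LinftyNorm

lemma isBigO_log_of_geometric_bounds {x : ℕ → ℝ} {c m c' M : ℝ} (hc : 0 < c) (hm : 0 < m)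
    (hlow : ∀ N, c * m ^ N ≤ x N) (hup : ∀ N, x N ≤ c' * M ^ N) :
    (fun N => Real.log (x N)) =O[atTop] (fun N => (N : ℝ)) := by
  refine IsBigO.of_bound (|Real.log c| + |Real.log m| + |Real.log c'| + |Real.log M|) ?_
  filter_upwards [eventually_ge_atTop 1] with N hN
  have hN : (1 : ℝ) ≤ N := by exact_mod_cast hN
  have hx : 0 < x N := (by positivity : 0 < c * m ^ N).trans_le (hlow N)
  obtain ⟨hc', hM⟩ := mul_ne_zero_iff.mp (hx.trans_le (hup N)).ne'
  have lower : Real.log c + N * Real.log m ≤ Real.log (x N) := by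
    rw [← Real.log_pow, ← Real.log_mul hc.ne' (by positivity)]
    exact Real.log_le_log (by positivity) (hlow N)
  have upper : Real.log (x N) ≤ Real.log c' + N * Real.log M := by
    rw [← Real.log_pow, ← Real.log_mul hc' hM]
    exact Real.log_le_log hx (hup N)
  rw [Real.norm_natCast, Real.norm_eq_abs, abs_le]
  have := abs_nonneg (Real.log c); have := abs_nonneg (Real.log c')
  constructor
  · nlinarith [neg_abs_le (Real.log c), neg_abs_le (Real.log m), abs_nonneg (Real.log M)]
  · nlinarith [le_abs_self (Real.log c'), le_abs_self (Real.log M), abs_nonneg (Real.log m)]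

lemma tendsto_div_mul_rpow_of_isBigO_natCast {u : ℕ → ℝ}
    (hu : u =O[atTop] (fun N => (N : ℝ))) {k : ℝ} (hk : 1 < k) (c : ℝ) :
    Tendsto (fun N => u N / (c * (N : ℝ) ^ k)) atTop (𝓝 0) := by
  have hpow : Tendsto (fun N : ℕ => c⁻¹ * (N : ℝ) ^ (-(k - 1))) atTop (𝓝 0) := by
    simpa using ((tendsto_rpow_neg_atTop (by linarith : 0 < k - 1)).comp
      tendsto_natCast_atTop_atTop).const_mul c⁻¹
  refine (hu.mul (isBigO_refl (fun N : ℕ => (c * (N : ℝ) ^ k)⁻¹) _)).trans_tendsto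
    (hpow.congr' ?_)
  filter_upwards [eventually_gt_atTop 0] with N hN
  have hN : (0 : ℝ) < N := by exact_mod_cast hN
  rw [neg_sub, Real.rpow_sub hN, Real.rpow_one, mul_inv, div_eq_mul_inv]
  ring

def DiophantineBound (α β C d : ℝ) : Prop :=
  ∀ p q r : ℤ, Int.gcd p (Int.gcd q r) = 1 →
    1 / (C * (max |(p : ℝ)| (max |(q : ℝ)| |(r : ℝ)|)) ^ d) ≤
      |(p : ℝ) + α * (q : ℝ) + β * (r : ℝ)|

lemma one_le_max_abs_of_gcd_eq_one {p q r : ℤ} (h : Int.gcd p (Int.gcd q r) = 1) :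
    1 ≤ max |(p : ℝ)| (max |(q : ℝ)| |(r : ℝ)|) := by
  have one_le : ∀ x : ℤ, x ≠ 0 → 1 ≤ |(x : ℝ)| := fun x hx => by
    exact_mod_cast Int.one_le_abs hx
  by_cases hp : p = 0
  · by_cases hq : q = 0
    · have hr : r ≠ 0 := by rintro rfl; simp [hp, hq] at h
      exact le_max_of_le_right (le_max_of_le_right (one_le r hr))
    · exact le_max_of_le_right (le_max_of_le_left (one_le q hq))
  · exact le_max_of_le_left (one_le p hp)

lemma HS_Mmat (α β : ℝ) (A : Matrix (Fin 3) (Fin 3) ℝ) :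
    HS (Mmat α β) A = A 0 2 + α * A 1 2 + β * A 2 2 := by
  simp [HS, Mmat, Matrix.trace, Matrix.vecMul, dotProduct, Fin.sum_univ_three]

lemma abs_HS_Mmat_AI_le (α β : ℝ) {N : ℕ} (I : Fin N → Fin 2) :
    |HS (Mmat α β) (AI I)| ≤ (1 + |α| + |β|) * 2 ^ N := by
  rw [HS_Mmat]
  have h0 := abs_AI_apply_le I 0 2
  have h1 := abs_AI_apply_le I 1 2
  have h2 := abs_AI_apply_le I 2 2
  calc _ ≤ |AI I 0 2| + |α| * |AI I 1 2| + |β| * |AI I 2 2| := by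
        simpa only [abs_mul] using abs_add_three (AI I 0 2) (α * AI I 1 2) (β * AI I 2 2)
    _ ≤ 2 ^ N + |α| * 2 ^ N + |β| * 2 ^ N := by gcongr
    _ = _ := by ring

lemma le_abs_HS_Mmat_AI {α β C d : ℝ} (hC : 0 < C) (hd : 0 ≤ d)
    (h : DiophantineBound α β C d) {N : ℕ} (I : Fin N → Fin 2) :
    1 / (C * (2 ^ d) ^ N) ≤ |HS (Mmat α β) (AI I)| := by
  obtain ⟨B, hB, hBA⟩ := exists_isUnit_map_eq_AI I
  have hgcd := gcd_col_eq_one_of_isUnit hB 2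
  have hentry : ∀ i, |(B i 2 : ℝ)| ≤ 2 ^ N := fun i => by
    simpa [← hBA] using abs_AI_apply_le I i 2
  have hb : 1 ≤ max |(B 0 2 : ℝ)| (max |(B 1 2 : ℝ)| |(B 2 2 : ℝ)|) :=
    one_le_max_abs_of_gcd_eq_one hgcd
  rw [HS_Mmat, ← hBA]
  refine le_trans ?_ (h _ _ _ hgcd)
  rw [Real.rpow_pow_comm zero_le_two]
  gcongr
  exact max_le (hentry 0) (max_le (hentry 1) (hentry 2))

lemma le_Z {α β C d s : ℝ} (hC : 0 < C) (hd : 0 ≤ d) (h : DiophantineBound α β C d)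
    (hs : 0 ≤ s) (N : ℕ) : ((1 + |α| + |β|) ^ s)⁻¹ * (2 / 2 ^ s) ^ N ≤ Z N α β s := by
  calc _ = (Finset.univ : Finset (Fin N → Fin 2)).card •
        (1 / ((1 + |α| + |β|) * 2 ^ N) ^ s) := by
        rw [Finset.card_univ, Fintype.card_fun, Fintype.card_fin, Fintype.card_fin, nsmul_eq_mul,
          Real.mul_rpow (by positivity) (by positivity), ← Real.rpow_pow_comm zero_le_two]
        push_cast
        rw [div_pow]
        field_simp
    _ ≤ Z N α β s := Finset.card_nsmul_le_sum _ _ _ fun I _ =>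
        one_div_le_one_div_of_le
          (Real.rpow_pos_of_pos ((by positivity : (0 : ℝ) < 1 / (C * (2 ^ d) ^ N)).trans_le
            (le_abs_HS_Mmat_AI hC hd h I)) s)
          (Real.rpow_le_rpow (abs_nonneg _) (abs_HS_Mmat_AI_le α β I) hs)

lemma Z_le {α β C d s : ℝ} (hC : 0 < C) (hd : 0 ≤ d) (h : DiophantineBound α β C d)
    (hs : 0 ≤ s) (N : ℕ) : Z N α β s ≤ C ^ s * (2 * (2 ^ d) ^ s) ^ N := by
  have hlo : (0 : ℝ) < 1 / (C * (2 ^ d) ^ N) := by positivity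
  calc Z N α β s
      ≤ (Finset.univ : Finset (Fin N → Fin 2)).card • (1 / (1 / (C * (2 ^ d) ^ N)) ^ s) :=
        Finset.sum_le_card_nsmul _ _ _ fun I _ =>
          one_div_le_one_div_of_le (Real.rpow_pos_of_pos hlo s)
            (Real.rpow_le_rpow hlo.le (le_abs_HS_Mmat_AI hC hd h I) hs)
    _ = _ := by
        rw [Finset.card_univ, Fintype.card_fun, Fintype.card_fin, Fintype.card_fin, nsmul_eq_mul,
          Real.div_rpow zero_le_one (by positivity), Real.one_rpow, one_div_one_div,
          Real.mul_rpow hC.le (by positivity), ← Real.rpow_pow_comm (by positivity)]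
        push_cast
        ring

/-- If `1/(C bᵈ) ≤ |p + αq + βr|` for all relatively prime integers `p, q, r`
(with `b = max(|p|,|q|,|r|)`), then for every `k > 1` and every `s > 2` the
`k`-free energy limit of `(α, β)` exists and equals zero. -/
theorem k_free_energy_limit_zero (α β : ℝ) (C d : ℝ) (hC : 0 < C) (hd : 2 ≤ d)
    (h : ∀ p q r : ℤ, Int.gcd p (Int.gcd q r) = 1 →
      1 / (C * (max |(p : ℝ)| (max |(q : ℝ)| |(r : ℝ)|)) ^ d) ≤
        |(p : ℝ) + α * (q : ℝ) + β * (r : ℝ)|) :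
    ∀ k : ℝ, 1 < k → ∀ s : ℝ, 2 < s →
      Filter.Tendsto (fun N : ℕ => Real.log (Z N α β s) / (s * (N : ℝ) ^ k))
        Filter.atTop (nhds 0) := by
  intro k hk s hs
  have hd0 : 0 ≤ d := by linarith
  have hs0 : 0 ≤ s := by linarith
  have hlogZ : (fun N => Real.log (Z N α β s)) =O[atTop] (fun N => (N : ℝ)) :=
    isBigO_log_of_geometric_bounds (by positivity) (by positivity)
      (le_Z hC hd0 h hs0) (Z_le hC hd0 h hs0)
  exact tendsto_div_mul_rpow_of_isBigO_natCast hlogZ hk s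

end
end

section
/- Let (α, β) ∈ △ have a non-terminating triangle sequence. Then for every integer k ≥ 0, |(1, α, β)·C_k| ≤ 1/|x_{k+1}|. -/
open Matrix Filter

noncomputable section

/-- The triangle `△ = {(x,y) : 1 ≥ x ≥ y > 0}`. -/
def tri : Set (ℝ × ℝ) := {p | 1 ≥ p.1 ∧ p.1 ≥ p.2 ∧ p.2 > 0}

/-- The subtriangle `△_k = {(x,y) ∈ △ : 1 − x − ky ≥ 0 > 1 − x − (k+1)y}`. -/
def triSub (k : ℕ) : Set (ℝ × ℝ) :=
  {p | p ∈ tri ∧ 1 - p.1 - (k : ℝ) * p.2 ≥ 0 ∧ 0 > 1 - p.1 - ((k : ℝ) + 1) * p.2}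

/-- The index `k` with `(x,y) ∈ △_k`, i.e. `⌊(1-x)/y⌋`. -/
def triIndex (p : ℝ × ℝ) : ℤ := ⌊(1 - p.1) / p.2⌋

/-- The triangle map `T`, sending `(α, β) ∈ △_k` to `(β/α, (1 − α − kβ)/α)`. -/
def T (p : ℝ × ℝ) : ℝ × ℝ :=
  (p.2 / p.1, (1 - p.1 - (triIndex p : ℝ) * p.2) / p.1)

/-- The vectors `C_k` (with indices shifted by 3):
`Cvec a 0 = C₋₃ = (1,0,0)ᵀ`, `Cvec a 1 = C₋₂ = (0,1,0)ᵀ`, `Cvec a 2 = C₋₁ = (0,0,1)ᵀ`,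
and `Cvec a (k+3) = C_k = C_{k-3} - C_{k-2} - a_k C_{k-1}` for `k ≥ 0`. -/
def Cvec (a : ℕ → ℕ) : ℕ → Fin 3 → ℝ
  | 0 => ![1, 0, 0]
  | 1 => ![0, 1, 0]
  | 2 => ![0, 0, 1]
  | (n + 3) => Cvec a n - Cvec a (n + 1) - (a n : ℝ) • Cvec a (n + 2)

/-- `d_k = (1, α, β) · C_k`, with the index shifted by 3: `dvec a α β (k+3) = d_k`. -/
def dvec (a : ℕ → ℕ) (α β : ℝ) (n : ℕ) : ℝ := ![1, α, β] ⬝ᵥ Cvec a n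

/-- `X_n = C_n × C_{n+1}`, with the index shifted by 2: `Xvec a (n+2) = X_n`
(`X_n` is defined for `n ≥ -2`). -/
def Xvec (a : ℕ → ℕ) (n : ℕ) : Fin 3 → ℝ :=
  crossProduct (Cvec a (n + 1)) (Cvec a (n + 2))

/-! Since `det (C_n, C_{n+1}, C_{n+2}) = 1`, the cross products `C_{n+1} × C_{n+2}`,
`C_{n+2} × C_n`, `C_n × C_{n+1}` form the dual basis, and expanding `(1, α, β)` in it gives
`1 = d_n x + d_{n+1} y + d_{n+2} z` for their first coordinates `x, y, z`. The recurrence keeps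
`x > 0` and `y, z ≥ 0`, and `d_n > 0` for all `n` because `d_{n+1} = d_n · (Tⁿ(α, β)).1` and
`d_{n+2} = d_n · (Tⁿ(α, β)).2`. Hence `d_n x ≤ 1`. -/

theorem triple_product_smul_eq_sum_dotProduct_smul_cross {R : Type*} [CommRing R]
    (u v w x : Fin 3 → R) :
    (u ⬝ᵥ v ⨯₃ w) • x = (x ⬝ᵥ u) • v ⨯₃ w + (x ⬝ᵥ v) • w ⨯₃ u + (x ⬝ᵥ w) • u ⨯₃ v := by
  ext i
  fin_cases i <;> simp [cross_apply, dotProduct, Fin.sum_univ_three] <;> ring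

theorem triple_product_sub_sub_smul {R : Type*} [CommRing R] (u v w : Fin 3 → R) (t : R) :
    v ⬝ᵥ w ⨯₃ (u - v - t • w) = u ⬝ᵥ v ⨯₃ w := by
  simp only [map_sub, map_smul, cross_self, smul_zero, sub_zero, dotProduct_sub, dot_cross_self]
  exact (triple_product_permutation u v w).symm

section TriangleMap

variable {p : ℝ × ℝ} {k : ℕ}

theorem triIndex_eq_of_mem_triSub (hp : p ∈ triSub k) : triIndex p = k := by
  obtain ⟨⟨-, -, hy⟩, hlow, hup⟩ := hp
  rw [triIndex, Int.floor_eq_iff, le_div_iff₀ hy, div_lt_iff₀ hy]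
  push_cast
  constructor <;> linarith

theorem T_of_mem_triSub (hp : p ∈ triSub k) :
    T p = (p.2 / p.1, (1 - p.1 - k * p.2) / p.1) := by
  rw [T, triIndex_eq_of_mem_triSub hp]
  rfl

theorem fst_pos_of_mem_triSub (hp : p ∈ triSub k) : 0 < p.1 :=
  hp.1.2.2.trans_le hp.1.2.1

end TriangleMap

section Recurrence

variable (a : ℕ → ℕ)

theorem Cvec_add_three (n : ℕ) :
    Cvec a (n + 3) = Cvec a n - Cvec a (n + 1) - (a n : ℝ) • Cvec a (n + 2) := rfl

theorem Cvec_triple_product (n : ℕ) : Cvec a n ⬝ᵥ Cvec a (n + 1) ⨯₃ Cvec a (n + 2) = 1 := by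
  induction n with
  | zero => simp [Cvec, cross_apply, dotProduct, Fin.sum_univ_three]
  | succ n ih => rwa [Cvec_add_three, triple_product_sub_sub_smul]

theorem cross_Cvec_add_two_add_three (n : ℕ) :
    Cvec a (n + 2) ⨯₃ Cvec a (n + 3)
      = Cvec a (n + 2) ⨯₃ Cvec a n + Cvec a (n + 1) ⨯₃ Cvec a (n + 2) := by
  rw [Cvec_add_three, map_sub, map_sub, map_smul, cross_self, smul_zero, sub_zero, sub_eq_add_neg,
    cross_anticomm]

theorem cross_Cvec_add_three_add_one (n : ℕ) :
    Cvec a (n + 3) ⨯₃ Cvec a (n + 1)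
      = Cvec a n ⨯₃ Cvec a (n + 1) + (a n : ℝ) • Cvec a (n + 1) ⨯₃ Cvec a (n + 2) := by
  rw [Cvec_add_three, map_sub, map_sub, map_smul, LinearMap.sub_apply, LinearMap.sub_apply,
    LinearMap.smul_apply, cross_self, sub_zero, sub_eq_add_neg, ← smul_neg, cross_anticomm]

theorem Xvec_fst_pos_and_cross_fst_nonneg (n : ℕ) :
    0 < Xvec a n 0 ∧ 0 ≤ (Cvec a (n + 2) ⨯₃ Cvec a n) 0 ∧ 0 ≤ (Cvec a n ⨯₃ Cvec a (n + 1)) 0 := by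
  induction n with
  | zero => simp [Xvec, Cvec, cross_apply]
  | succ n ih =>
    obtain ⟨hu, hw, hv⟩ := ih
    refine ⟨?_, ?_, hu.le⟩
    · rw [Xvec, cross_Cvec_add_two_add_three, Pi.add_apply]
      exact add_pos_of_nonneg_of_pos hw hu
    · rw [cross_Cvec_add_three_add_one, Pi.add_apply, Pi.smul_apply, smul_eq_mul]
      exact add_nonneg hv (mul_nonneg (Nat.cast_nonneg _) hu.le)

variable (α β : ℝ)

theorem dvec_add_three (n : ℕ) :
    dvec a α β (n + 3) = dvec a α β n - dvec a α β (n + 1) - a n * dvec a α β (n + 2) := by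
  simp only [dvec, Cvec_add_three, dotProduct_sub, dotProduct_smul, smul_eq_mul]

variable {a α β}

theorem dvec_pos_and_eq_mul_orbit (hseq : ∀ n : ℕ, T^[n] (α, β) ∈ triSub (a n)) (n : ℕ) :
    0 < dvec a α β n ∧ dvec a α β (n + 1) = dvec a α β n * (T^[n] (α, β)).1 ∧
      dvec a α β (n + 2) = dvec a α β n * (T^[n] (α, β)).2 := by
  induction n with
  | zero => simp [dvec, Cvec, dotProduct, Fin.sum_univ_three]
  | succ n ih =>
    obtain ⟨hd, h1, h2⟩ := ih
    have hx := fst_pos_of_mem_triSub (hseq n)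
    rw [Function.iterate_succ_apply', T_of_mem_triSub (hseq n), dvec_add_three, h1, h2]
    refine ⟨by positivity, ?_, ?_⟩ <;> field_simp

theorem dvec_pos (hseq : ∀ n : ℕ, T^[n] (α, β) ∈ triSub (a n)) (n : ℕ) : 0 < dvec a α β n :=
  (dvec_pos_and_eq_mul_orbit hseq n).1

theorem dvec_mul_Xvec_fst_le_one (hseq : ∀ n : ℕ, T^[n] (α, β) ∈ triSub (a n)) (n : ℕ) :
    dvec a α β n * Xvec a n 0 ≤ 1 := by
  obtain ⟨-, hw, hv⟩ := Xvec_fst_pos_and_cross_fst_nonneg a n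
  have hexpand := congrFun (triple_product_smul_eq_sum_dotProduct_smul_cross
    (Cvec a n) (Cvec a (n + 1)) (Cvec a (n + 2)) ![1, α, β]) 0
  simp only [Cvec_triple_product, one_mul, Matrix.cons_val_zero, Pi.add_apply, Pi.smul_apply,
    smul_eq_mul] at hexpand
  change 1 = dvec a α β n * Xvec a n 0 + dvec a α β (n + 1) * _ + dvec a α β (n + 2) * _
    at hexpand
  nlinarith [dvec_pos hseq (n + 1), dvec_pos hseq (n + 2)]

end Recurrence

/-- If `(α, β) ∈ △` has non-terminating triangle sequence `(a₀, a₁, …)`, then for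
every `k ≥ 0`, `|(1, α, β)·C_k| ≤ 1/|x_{k+1}|` (here `Cvec a (k+3) = C_k` and
`Xvec a (k+3) 0 = x_{k+1}`). -/
theorem abs_dot_C_le (α β : ℝ) (a : ℕ → ℕ)
    (hseq : ∀ n : ℕ, T^[n] (α, β) ∈ triSub (a n)) :
    ∀ k : ℕ, |dvec a α β (k + 3)| ≤ 1 / |Xvec a (k + 3) 0| := by
  intro k
  have hX := (Xvec_fst_pos_and_cross_fst_nonneg a (k + 3)).1
  rw [abs_of_pos (dvec_pos hseq _), abs_of_pos hX, le_div_iff₀ hX]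
  exact dvec_mul_Xvec_fst_le_one hseq (k + 3)

end
end

section
/- Let (α, β) ∈ △ have non-terminating triangle sequence (a₀, a₁, …). Then for every integer k ≥ 0, X_{k+1} = X_k + a_{k+1} X_{k−1} + X_{k−2}. -/
open Matrix Filter

noncomputable section

/-- If `(α, β) ∈ △` has non-terminating triangle sequence `(a₀, a₁, …)`, then for
every `k ≥ 0`, `X_{k+1} = X_k + a_{k+1} X_{k−1} + X_{k−2}` (indices shifted by 2:
`Xvec a (n+2) = X_n`). -/
theorem X_recurrence (α β : ℝ) (a : ℕ → ℕ)
    (hseq : ∀ n : ℕ, T^[n] (α, β) ∈ triSub (a n)) :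
    ∀ k : ℕ,
      Xvec a (k + 3) = Xvec a (k + 2) + (a (k + 1) : ℝ) • Xvec a (k + 1) + Xvec a k := by
  intro k
  have h4 : Cvec a (k + 4) =
      Cvec a (k + 1) - Cvec a (k + 2) - (a (k + 1) : ℝ) • Cvec a (k + 3) := rfl
  have h5 : Cvec a (k + 5) =
      Cvec a (k + 2) - Cvec a (k + 3) - (a (k + 2) : ℝ) • Cvec a (k + 4) := rfl
  funext i
  fin_cases i <;>
    simp [Xvec, h4, h5, crossProduct, Pi.add_apply, Pi.sub_apply, Pi.smul_apply,
      smul_eq_mul] <;>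
    ring

end
end

section
/- Let (α, β) ∈ △ have non-terminating triangle sequence (a₀, a₁, …). Then for every integer k ≥ 0, the determinant of the 3×3 matrix with columns X_k + X_{k−2}, X_{k−1}, X_k equals 1. -/
open Matrix Filter

noncomputable section

lemma cross_key (u v w x : Fin 3 → ℝ) :
    (Matrix.of fun i : Fin 3 =>
      ![(crossProduct w x + crossProduct u v) i,
        (crossProduct v w) i, (crossProduct w x) i]).det
    = ((crossProduct u v) ⬝ᵥ w) * ((crossProduct v w) ⬝ᵥ x) := by
  simp [Matrix.det_fin_three, crossProduct, dotProduct, Fin.sum_univ_three]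
  ring

lemma cross_cyc (u v w : Fin 3 → ℝ) (c : ℝ) :
    (crossProduct v w) ⬝ᵥ (u - v - c • w) = (crossProduct u v) ⬝ᵥ w := by
  simp [crossProduct, dotProduct, Fin.sum_univ_three]
  ring

lemma triple (a : ℕ → ℕ) : ∀ n : ℕ,
    (crossProduct (Cvec a n) (Cvec a (n + 1))) ⬝ᵥ Cvec a (n + 2) = 1 := by
  intro n
  induction n with
  | zero => simp [Cvec, crossProduct, dotProduct, Fin.sum_univ_three]
  | succ m ih =>
      have h : Cvec a (m + 3) = Cvec a m - Cvec a (m + 1) - (a m : ℝ) • Cvec a (m + 2) := rfl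
      rw [show m + 1 + 2 = m + 3 from rfl, h, cross_cyc]
      exact ih

/-- If `(α, β) ∈ △` has non-terminating triangle sequence `(a₀, a₁, …)`, then for
every `k ≥ 0` the determinant of the 3×3 matrix with columns
`X_k + X_{k−2}, X_{k−1}, X_k` equals 1 (indices shifted by 2: `Xvec a (n+2) = X_n`). -/
theorem det_X_matrix_eq_one (α β : ℝ) (a : ℕ → ℕ)
    (hseq : ∀ n : ℕ, T^[n] (α, β) ∈ triSub (a n)) :
    ∀ k : ℕ,
      (Matrix.of fun i : Fin 3 =>
        ![(Xvec a (k + 2) + Xvec a k) i, Xvec a (k + 1) i, Xvec a (k + 2) i]).det = 1 := by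
  intro k
  have key := cross_key (Cvec a (k + 1)) (Cvec a (k + 2)) (Cvec a (k + 3)) (Cvec a (k + 4))
  simp only [Xvec]
  rw [show k + 2 + 1 = k + 3 from rfl, show k + 2 + 2 = k + 4 from rfl,
    show k + 1 + 1 = k + 2 from rfl, show k + 1 + 2 = k + 3 from rfl, key,
    triple a (k + 1), triple a (k + 2), one_mul]

end
end

section
/- Let (α, β) ∈ △ have non-terminating triangle sequence (a₀, a₁, …). Then d_k > 0 for every k ≥ −3, and for every k ≥ −1 the digit a_{k+1} is the unique nonnegative integer n satisfying d_{k−2} − d_{k−1} − n·d_k ≥ 0 > d_{k−2} − d_{k−1} − (n+1)·d_k; consequently d_{k+1} = d_{k−2} − d_{k−1} − a_{k+1} d_k. -/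
open Matrix Filter

noncomputable section

/-- If `(α, β) ∈ △` has non-terminating triangle sequence `(a₀, a₁, …)`, then
`d_k > 0` for all `k ≥ −3`, and for every `k ≥ −1` the digit `a_{k+1}` is the unique
nonnegative integer `n` with `d_{k−2} − d_{k−1} − n d_k ≥ 0 > d_{k−2} − d_{k−1} − (n+1) d_k`;
consequently `d_{k+1} = d_{k−2} − d_{k−1} − a_{k+1} d_k`.
(Indices are shifted by 3: `dvec a α β (k+3) = d_k`; below `m = k + 1`, so that
`d_{k-2} = dvec a α β m`, `d_{k-1} = dvec a α β (m+1)`, `d_k = dvec a α β (m+2)`,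
`d_{k+1} = dvec a α β (m+3)`.) -/
theorem d_pos_and_digit_characterization (α β : ℝ) (a : ℕ → ℕ)
    (hseq : ∀ n : ℕ, T^[n] (α, β) ∈ triSub (a n)) :
    (∀ n : ℕ, 0 < dvec a α β n) ∧
    ∀ m : ℕ,
      (dvec a α β m - dvec a α β (m + 1) - (a m : ℝ) * dvec a α β (m + 2) ≥ 0 ∧
        0 > dvec a α β m - dvec a α β (m + 1) - ((a m : ℝ) + 1) * dvec a α β (m + 2)) ∧
      (∀ n : ℕ,
        (dvec a α β m - dvec a α β (m + 1) - (n : ℝ) * dvec a α β (m + 2) ≥ 0 ∧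
          0 > dvec a α β m - dvec a α β (m + 1) - ((n : ℝ) + 1) * dvec a α β (m + 2)) →
        n = a m) ∧
      dvec a α β (m + 3) =
        dvec a α β m - dvec a α β (m + 1) - (a m : ℝ) * dvec a α β (m + 2) := by
  set p : ℕ → ℝ × ℝ := fun n => T^[n] (α, β) with hp
  have hmem : ∀ n, p n ∈ triSub (a n) := hseq
  have hyx : ∀ n, (p n).2 ≤ (p n).1 := fun n => (hmem n).1.2.1
  have hy : ∀ n, 0 < (p n).2 := fun n => (hmem n).1.2.2
  have hx : ∀ n, 0 < (p n).1 := fun n => lt_of_lt_of_le (hy n) (hyx n)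
  have h1 : ∀ n, 1 - (p n).1 - (a n : ℝ) * (p n).2 ≥ 0 := fun n => (hmem n).2.1
  have h2 : ∀ n, 0 > 1 - (p n).1 - ((a n : ℝ) + 1) * (p n).2 := fun n => (hmem n).2.2
  -- the index functional recovers the digit
  have hidx : ∀ n, triIndex (p n) = (a n : ℤ) := by
    intro n
    have hle : ((a n : ℤ) : ℝ) ≤ (1 - (p n).1) / (p n).2 := by
      rw [le_div_iff₀ (hy n)]
      push_cast
      linarith [h1 n]
    have hlt : (1 - (p n).1) / (p n).2 < (a n : ℤ) + 1 := by
      rw [div_lt_iff₀ (hy n)]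
      push_cast
      linarith [h2 n]
    exact Int.floor_eq_iff.mpr ⟨hle, hlt⟩
  have hstep : ∀ n, p (n + 1) =
      ((p n).2 / (p n).1, (1 - (p n).1 - (a n : ℝ) * (p n).2) / (p n).1) := by
    intro n
    have h : p (n + 1) = T (p n) := by
      simp only [hp, Function.iterate_succ_apply']
    rw [h, T, hidx n]
    push_cast
    rfl
  -- the partial products
  set Q : ℕ → ℝ := fun n => ∏ i ∈ Finset.range n, (p i).1 with hQ
  have hQpos : ∀ n, 0 < Q n := by
    intro n
    exact Finset.prod_pos fun i _ => hx i
  have hQsucc : ∀ n, Q (n + 1) = Q n * (p n).1 := fun n => Finset.prod_range_succ _ n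
  have hxx : ∀ n, (p n).1 * (p (n + 1)).1 = (p n).2 := by
    intro n
    rw [hstep n]
    field_simp
    rw [mul_comm, mul_div_assoc, div_self (hx n).ne', mul_one]
  have hxy2 : ∀ n, (p n).1 * (p (n + 1)).2 = 1 - (p n).1 - (a n : ℝ) * (p n).2 := by
    intro n
    rw [hstep n]
    field_simp
    rw [mul_comm, mul_div_assoc, div_self (hx n).ne', mul_one]
  have hQ2 : ∀ n, Q (n + 2) = Q n * (p n).2 := by
    intro n
    rw [hQsucc (n + 1), hQsucc n, mul_assoc, hxx n]
  have hQ3 : ∀ n, Q (n + 3) = Q n * (1 - (p n).1 - (a n : ℝ) * (p n).2) := by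
    intro n
    have : Q (n + 3) = Q (n + 1) * (p (n + 1)).2 := hQ2 (n + 1)
    rw [this, hQsucc n, mul_assoc, hxy2 n]
  -- dvec equals the partial product
  have drec : ∀ n, dvec a α β (n + 3) =
      dvec a α β n - dvec a α β (n + 1) - (a n : ℝ) * dvec a α β (n + 2) := by
    intro n
    simp [dvec, Cvec, dotProduct_sub, dotProduct_smul, smul_eq_mul]
  have hp0 : p 0 = (α, β) := rfl
  have key : ∀ n, dvec a α β n = Q n ∧ dvec a α β (n + 1) = Q (n + 1) ∧
      dvec a α β (n + 2) = Q (n + 2) := by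
    intro n
    induction n with
    | zero =>
      have e0 : dvec a α β 0 = 1 := by
        simp [dvec, Cvec, dotProduct, Fin.sum_univ_three]
      have e1 : dvec a α β 1 = α := by
        simp [dvec, Cvec, dotProduct, Fin.sum_univ_three]
      have e2 : dvec a α β 2 = β := by
        simp [dvec, Cvec, dotProduct, Fin.sum_univ_three]
      have q0 : Q 0 = 1 := Finset.prod_range_zero _
      have q1 : Q 1 = α := by
        rw [hQsucc 0, q0, one_mul, hp0]
      have q2 : Q 2 = β := by
        rw [hQ2 0, q0, one_mul, hp0]
      exact ⟨by rw [e0, q0], by rw [e1, q1], by rw [e2, q2]⟩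
    | succ k ih =>
      obtain ⟨i0, i1, i2⟩ := ih
      refine ⟨i1, i2, ?_⟩
      have : k + 1 + 2 = k + 3 := by ring
      rw [this, drec k, i0, i1, i2, hQ3 k, hQsucc k, hQ2 k]
      ring
  have dQ : ∀ n, dvec a α β n = Q n := fun n => (key n).1
  have dpos : ∀ n, 0 < dvec a α β n := fun n => (dQ n) ▸ hQpos n
  refine ⟨dpos, fun m => ?_⟩
  have e1 : ∀ n : ℕ, dvec a α β m - dvec a α β (m + 1) - (n : ℝ) * dvec a α β (m + 2)
      = Q m * (1 - (p m).1 - (n : ℝ) * (p m).2) := by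
    intro n
    rw [dQ m, dQ (m + 1), dQ (m + 2), hQsucc m, hQ2 m]
    ring
  have e1' : ∀ n : ℕ, dvec a α β m - dvec a α β (m + 1) - ((n : ℝ) + 1) * dvec a α β (m + 2)
      = Q m * (1 - (p m).1 - ((n : ℝ) + 1) * (p m).2) := by
    intro n
    rw [dQ m, dQ (m + 1), dQ (m + 2), hQsucc m, hQ2 m]
    ring
  have main1 : dvec a α β m - dvec a α β (m + 1) - (a m : ℝ) * dvec a α β (m + 2) ≥ 0 := by
    rw [e1 (a m)]
    exact mul_nonneg (hQpos m).le (h1 m)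
  have main2 : 0 > dvec a α β m - dvec a α β (m + 1) - ((a m : ℝ) + 1) * dvec a α β (m + 2) := by
    rw [e1' (a m)]
    exact mul_neg_of_pos_of_neg (hQpos m) (by linarith [h2 m])
  refine ⟨⟨main1, main2⟩, fun n ⟨hn1, hn2⟩ => ?_, drec m⟩
  have hd2 : 0 < dvec a α β (m + 2) := dpos (m + 2)
  have l1 : (n : ℝ) < (a m : ℝ) + 1 := by nlinarith
  have l2 : (a m : ℝ) < (n : ℝ) + 1 := by nlinarith
  have l1' : n < a m + 1 := by exact_mod_cast l1
  have l2' : a m < n + 1 := by exact_mod_cast l2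
  omega

end
end
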